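/- arXiv:2309.07070 — 2 statements merged into one kernel-verified Lean document; each statement's English description precedes it below -/
import Mathlib

section
/- For n ≥ 1, if b is a border of M_{2n+1}, then φ(b)·0 is a border of M_{2n+2}. -/
/-- The Fibonacci morphism: `false` (=0) ↦ 01, `true` (=1) ↦ 0. -/
def phi (w : List Bool) : List Bool :=
  w.flatMap (fun b => if b then [false] else [false, true])

/-- The Fibonacci words: f₁ = 1, f₂ = 0, f_{n+2} = f_{n+1} f_n. -/
def fw : ℕ → List Bool
  | 0 => []
  | 1 => [true]
  | 2 => [false]
  | (n+3) => fw (n+2) ++ fw (n+1)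

/-- Palindromic prefix: f_n with its last two letters removed. -/
def pw (n : ℕ) : List Bool := (fw n).dropLast.dropLast

/-- Minimal forbidden words of the Fibonacci word:
`M_{2n+1} = 1 p_{2n+1} 1`, `M_{2n+2} = 0 p_{2n+2} 0`. -/
def Mw (n : ℕ) : List Bool :=
  if n % 2 = 0 then false :: (pw n ++ [false]) else true :: (pw n ++ [true])

/-- Correlation bit: `corr u v k` holds iff `C_{u,v}[k] = 1`. -/
def corr {α : Type*} (u v : List α) (k : ℕ) : Prop :=
  ∀ i j : ℕ, i < u.length → j < v.length → i = j + k → u[i]? = v[j]?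

/-- A border of a word is both a prefix and a suffix. -/
def IsBorder {α : Type*} (b w : List α) : Prop := b <+: w ∧ b <:+ w

/-- The set of nonempty borders of `M_n`. -/
def Bset (n : ℕ) : Set (List Bool) := {b | b ≠ [] ∧ IsBorder b (Mw n)}

open scoped Classical in
/-- The correlation polynomial `C_{u,v}(z) = ∑_{k<|u|} C_{u,v}[k] z^{|u|-1-k}`. -/
noncomputable def corrPoly (u v : List Bool) : Polynomial ℤ :=
  ∑ k ∈ Finset.range u.length,
    if corr u v k then Polynomial.X ^ (u.length - 1 - k) else 0

open scoped Classical in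
/-- The nonempty borders of `w`, as a finset. -/
noncomputable def borderFinset (w : List Bool) : Finset (List Bool) :=
  ((Finset.range (w.length + 1)).image (fun k => w.take k)).filter
    (fun b => b ≠ [] ∧ b <:+ w)

/-!
Since `f_{2n+3}` ends in `01` and `φ(f_k) = f_{k+1}`, applying `φ` to `f_{2n+3} = u·01` gives
`f_{2n+4} = φ(u)·0·10`, so `p_{2n+4} = φ(p_{2n+3})·0` and hence `M_{2n+2} = φ(M_{2n+1})·0`.
Now `φ` maps suffixes to suffixes, and since the image of every letter starts with `0`,
`φ(b)·0` is a prefix of `φ(w)·0` whenever `b` is a prefix of `w`.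
-/

@[simp]
lemma phi_nil : phi [] = [] := rfl

@[simp]
lemma phi_cons (a : Bool) (w : List Bool) :
    phi (a :: w) = (if a then [false] else [false, true]) ++ phi w :=
  List.flatMap_cons

@[simp]
lemma phi_append (u v : List Bool) : phi (u ++ v) = phi u ++ phi v :=
  List.flatMap_append

lemma phi_fw : ∀ k, phi (fw (k + 1)) = fw (k + 2)
  | 0 => rfl
  | 1 => rfl
  | k + 2 => by
    rw [show fw (k + 3) = fw (k + 2) ++ fw (k + 1) from rfl, phi_append, phi_fw (k + 1),
      phi_fw k]
    rfl

lemma exists_fw_odd_eq_append : ∀ n, ∃ u, fw (2 * n + 3) = u ++ [false, true]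
  | 0 => ⟨[], rfl⟩
  | n + 1 => by
    obtain ⟨u, hu⟩ := exists_fw_odd_eq_append n
    exact ⟨fw (2 * n + 4) ++ u, by
      rw [show fw (2 * (n + 1) + 3) = fw (2 * n + 4) ++ fw (2 * n + 3) from rfl, hu,
        List.append_assoc]⟩

lemma pw_even_eq_phi_append (n : ℕ) : pw (2 * n + 4) = phi (pw (2 * n + 3)) ++ [false] := by
  obtain ⟨u, hu⟩ := exists_fw_odd_eq_append n
  have hfw : fw (2 * n + 4) = (phi u ++ [false]) ++ [true, false] := by
    simp [← phi_fw (2 * n + 2), hu]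
  simp [pw, hfw, hu]

lemma Mw_even_eq_phi_append (n : ℕ) (hn : 1 ≤ n) :
    Mw (2 * n + 2) = phi (Mw (2 * n + 1)) ++ [false] := by
  obtain ⟨m, rfl⟩ := Nat.exists_eq_add_of_le' hn
  have hodd : ¬ (2 * (m + 1) + 1) % 2 = 0 := by omega
  have heven : (2 * (m + 1) + 2) % 2 = 0 := by omega
  rw [Mw, Mw, if_pos heven, if_neg hodd, show 2 * (m + 1) + 2 = 2 * m + 4 by ring,
    show 2 * (m + 1) + 1 = 2 * m + 3 by ring, pw_even_eq_phi_append]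
  simp

lemma List.IsPrefix.phi_append_false {b w : List Bool} (h : b <+: w) :
    phi b ++ [false] <+: phi w ++ [false] := by
  obtain ⟨_ | ⟨c, t⟩, rfl⟩ := h
  · simp
  · refine List.IsPrefix.trans ?_ (List.prefix_append _ [false])
    cases c <;> simp

lemma List.IsSuffix.phi_append {b w : List Bool} (h : b <:+ w) (s : List Bool) :
    phi b ++ s <:+ phi w ++ s := by
  obtain ⟨t, rfl⟩ := h
  exact ⟨phi t, by simp⟩

theorem stmt10 (n : ℕ) (hn : 1 ≤ n) (b : List Bool) (hb : IsBorder b (Mw (2*n+1))) :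
    IsBorder (phi b ++ [false]) (Mw (2*n+2)) := by
  rw [Mw_even_eq_phi_append n hn]
  exact ⟨hb.1.phi_append_false, hb.2.phi_append [false]⟩
end

section
/- For 3 ≤ n < m, if n and m have different parities, then M_n and M_m share no nonempty common border, and consequently the correlation C_{M_n,M_m} is the all-zero word (correlation polynomial 0). -/
/-!
`M_n = a_n p_n a_n` is a palindrome whose end letter `a_n` is the parity of `n`, and `p_n` is a
prefix of `p_m`. Let `s` be a nonempty suffix of `M_n` that is a prefix of `M_m`. If `s = M_n`,
its first letter would be both `a_n` and `a_m`. Otherwise, reading `s` forwards inside `M_m` and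
backwards inside the palindrome `M_n` gives `s = a_m t` and `reverse s = a_n t` for one prefix `t`
of `p_n`, and comparing the last letters of `a_m t` and `a_n t` forces `a_n = a_m`. A nonzero
correlation bit at shift `k` would make the suffix of `M_n` from position `k` such an `s`.
-/

namespace List

variable {α : Type*}

theorem IsPrefix.dropLast {l₁ l₂ : List α} (h : l₁ <+: l₂) : l₁.dropLast <+: l₂.dropLast :=
  prefix_of_prefix_length_le ((dropLast_prefix l₁).trans h) (dropLast_prefix l₂)
    (by simp only [length_dropLast]; have := h.length_le; omega)

theorem eq_of_reverse_cons_eq_cons {a b : α} {t : List α} (h : (b :: t).reverse = a :: t) :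
    a = b := by
  rcases t.eq_nil_or_concat with rfl | ⟨t', x, rfl⟩
  · simpa using h.symm
  · obtain ⟨rfl, -, rfl⟩ : x = a ∧ t'.reverse = t' ∧ b = x := by simpa using h
    rfl

theorem not_suffix_prefix_of_palindrome {a b : α} {p q s : List α} (hab : a ≠ b)
    (hp : p.reverse = p) (hpq : p <+: q) (hs : s ≠ []) (hsu : s <:+ a :: (p ++ [a]))
    (hsv : s <+: b :: (q ++ [b])) : False := by
  have hrev : s.reverse <+: a :: (p ++ [a]) := by
    simpa [hp] using reverse_prefix.2 hsu
  obtain ⟨c, t, rfl⟩ := exists_cons_of_ne_nil hs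
  obtain ⟨rfl, htq⟩ := cons_prefix_cons.1 hsv
  have hsu_len := hsu.length_le
  simp only [length_cons, length_append, length_nil] at hsu_len
  rcases Nat.lt_or_ge p.length t.length with hlong | hshort
  · have := hsu.eq_of_length (by simp; omega)
    exact hab (cons.inj this).1.symm
  · obtain ⟨d, t', hdt⟩ := exists_cons_of_ne_nil (reverse_ne_nil_iff.2 hs)
    rw [hdt] at hrev
    obtain ⟨rfl, ht'⟩ := cons_prefix_cons.1 hrev
    have hlen : t'.length = t.length := by simpa using (congrArg length hdt).symm
    have htp : t <+: p :=
      prefix_of_prefix_length_le htq (hpq.trans (prefix_append _ _)) hshort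
    have ht'p : t' <+: p :=
      prefix_of_prefix_length_le ht' (prefix_append _ _) (hlen ▸ hshort)
    have ht't : t' = t := (prefix_of_prefix_length_le ht'p htp hlen.le).eq_of_length hlen
    exact hab (eq_of_reverse_cons_eq_cons (ht't ▸ hdt))

theorem drop_prefix_of_corr {u v : List α} {k : ℕ} (hlen : u.length ≤ v.length)
    (h : corr u v k) : u.drop k <+: v := by
  rw [prefix_iff_eq_take]
  apply ext_getElem?
  intro i
  rw [getElem?_drop]
  by_cases hi : i < u.length - k
  · rw [length_drop, getElem?_take_of_lt hi]
    exact h (k + i) i (by omega) (by omega) (by omega)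
  · rw [getElem?_eq_none (by omega), getElem?_eq_none (by simp; omega)]

end List

def endBit (n : ℕ) : Bool := decide (n % 2 = 1)

theorem endBit_add_one (n : ℕ) : endBit (n + 1) = !endBit n := by
  rcases Nat.mod_two_eq_zero_or_one n with h | h <;> simp [endBit, Nat.add_mod, h]

theorem endBit_add_two (n : ℕ) : endBit (n + 2) = endBit n := by
  simp [endBit_add_one]

theorem endBit_ne_endBit {n m : ℕ} (h : n % 2 ≠ m % 2) : endBit n ≠ endBit m := by
  simp only [endBit, ne_eq, decide_eq_decide]
  omega

theorem Mw_eq (n : ℕ) : Mw n = endBit n :: (pw n ++ [endBit n]) := by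
  rcases Nat.mod_two_eq_zero_or_one n with h | h <;> simp [Mw, endBit, h]

theorem fw_add_two {n : ℕ} (hn : 1 ≤ n) : fw (n + 2) = fw (n + 1) ++ fw n := by
  obtain ⟨k, rfl⟩ := Nat.exists_eq_add_of_le' hn
  rfl

theorem fw_prefix_fw {n m : ℕ} (hn : 2 ≤ n) (hnm : n ≤ m) : fw n <+: fw m := by
  induction m, hnm using Nat.le_induction with
  | base => exact List.prefix_refl _
  | succ j hj ih =>
    obtain ⟨i, rfl⟩ : ∃ i, j = i + 1 := ⟨j - 1, by omega⟩
    exact ih.trans ⟨_, (fw_add_two (by omega)).symm⟩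

theorem pw_prefix_pw {n m : ℕ} (hn : 2 ≤ n) (hnm : n ≤ m) : pw n <+: pw m :=
  (fw_prefix_fw hn hnm).dropLast.dropLast

theorem endBits_suffix_fw : ∀ n, 3 ≤ n → [!endBit n, endBit n] <:+ fw n
  | 3, _ => by decide
  | 4, _ => by decide
  | n + 5, _ => by
    have h := endBits_suffix_fw (n + 3) (by omega)
    rw [← endBit_add_two] at h
    exact h.trans (List.suffix_append _ _)

theorem fw_eq_pw_append {n : ℕ} (hn : 3 ≤ n) : fw n = pw n ++ [!endBit n, endBit n] := by
  obtain ⟨l, hl⟩ := endBits_suffix_fw n hn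
  simp [pw, ← hl]

theorem pw_add_two {n : ℕ} (hn : 3 ≤ n) : pw (n + 2) = fw (n + 1) ++ pw n := by
  have h := fw_eq_pw_append (n := n + 2) (by omega)
  rw [fw_add_two (by omega), fw_eq_pw_append hn, endBit_add_two, ← List.append_assoc] at h
  exact (List.append_cancel_right h).symm

theorem fw_append_pw_comm {n : ℕ} (hn : 3 ≤ n) : fw (n + 1) ++ pw n = fw n ++ pw (n + 1) := by
  induction n, hn using Nat.le_induction with
  | base => decide
  | succ n hn ih => rw [fw_add_two (by omega), pw_add_two hn, List.append_assoc, ih]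

theorem pw_reverse : ∀ n, 3 ≤ n → (pw n).reverse = pw n
  | 3, _ => by decide
  | 4, _ => by decide
  | n + 5, _ => by
    have h3 := pw_reverse (n + 3) (by omega)
    have h4 := pw_reverse (n + 4) (by omega)
    calc (pw (n + 5)).reverse = (fw (n + 4) ++ pw (n + 3)).reverse := by rw [pw_add_two (by omega)]
      _ = fw (n + 3) ++ pw (n + 4) := by
        rw [fw_eq_pw_append (n := n + 4) (by omega), fw_eq_pw_append (n := n + 3) (by omega)]
        simp [h3, h4, endBit_add_one]
      _ = fw (n + 4) ++ pw (n + 3) := (fw_append_pw_comm (by omega)).symm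
      _ = pw (n + 5) := (pw_add_two (by omega)).symm

theorem Mw_no_overlap {n m : ℕ} (hn : 3 ≤ n) (hnm : n ≤ m) (hpar : n % 2 ≠ m % 2)
    {s : List Bool} (hs : s ≠ []) (hsn : s <:+ Mw n) (hsm : s <+: Mw m) : False := by
  rw [Mw_eq] at hsn hsm
  exact List.not_suffix_prefix_of_palindrome (endBit_ne_endBit hpar) (pw_reverse n hn)
    (pw_prefix_pw (by omega) hnm) hs hsn hsm

theorem stmt17 (n m : ℕ) (hn : 3 ≤ n) (hnm : n < m) (hpar : n % 2 ≠ m % 2) :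
    (∀ b : List Bool, b ≠ [] → ¬ (IsBorder b (Mw n) ∧ IsBorder b (Mw m))) ∧
    (∀ k < (Mw n).length, ¬ corr (Mw n) (Mw m) k) ∧
    corrPoly (Mw n) (Mw m) = 0 := by
  have hcorr : ∀ k < (Mw n).length, ¬ corr (Mw n) (Mw m) k := by
    intro k hk hk_corr
    have hlen : (Mw n).length ≤ (Mw m).length := by
      simpa [Mw_eq] using (pw_prefix_pw (by omega) hnm.le).length_le
    exact Mw_no_overlap hn hnm.le hpar (by simpa [List.drop_eq_nil_iff] using hk)
      (List.drop_suffix _ _) (List.drop_prefix_of_corr hlen hk_corr)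
  refine ⟨fun b hb hbord => Mw_no_overlap hn hnm.le hpar hb hbord.1.2 hbord.2.1, hcorr, ?_⟩
  exact Finset.sum_eq_zero fun k hk => if_neg (hcorr k (Finset.mem_range.1 hk))
end
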